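/- arXiv:1610.01039 — 8 statements merged into one kernel-verified Lean document; each statement's English description precedes it below -/
import Mathlib

section
/- Let G(s) = C(sE - A)^{-1}B + D be the transfer function of a linear system, and let G_r be the transfer function of the reduced system obtained by Petrov-Galerkin projection with matrices V, W (i.e., E_r = W^T E V, A_r = W^T A V, B_r = W^T B, C_r = C V, D_r = D). If σ ∈ ℂ is not an eigenvalue of the pencil (E, A) nor of (E_r, A_r), and b is a vector such that (A - σE)^{-1}Bb ∈ Range(V), then G(σ)b = G_r(σ)b. -/
open Matrix

/-- Petrov–Galerkin projection: right tangential interpolation. -/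
theorem right_tangential_interpolation
    {n m p r : ℕ}
    (E A : Matrix (Fin n) (Fin n) ℂ) (B : Matrix (Fin n) (Fin m) ℂ)
    (C : Matrix (Fin p) (Fin n) ℂ) (D : Matrix (Fin p) (Fin m) ℂ)
    (V W : Matrix (Fin n) (Fin r) ℂ) (σ : ℂ) (b : Fin m → ℂ) (hb : b ≠ 0)
    (h1 : IsUnit (σ • E - A))
    (h2 : IsUnit (σ • (Wᵀ * E * V) - Wᵀ * A * V))
    (hx : ∃ z : Fin r → ℂ, V *ᵥ z = (A - σ • E)⁻¹ *ᵥ (B *ᵥ b)) :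
    (C * (σ • E - A)⁻¹ * B + D) *ᵥ b
      = (C * V * (σ • (Wᵀ * E * V) - Wᵀ * A * V)⁻¹ * (Wᵀ * B) + D) *ᵥ b := by
  obtain ⟨z, hz⟩ := hx
  set M := σ • E - A with hM
  set Mr := σ • (Wᵀ * E * V) - Wᵀ * A * V with hMr
  have hMdet : IsUnit M.det := (Matrix.isUnit_iff_isUnit_det M).mp h1
  have hMrdet : IsUnit Mr.det := (Matrix.isUnit_iff_isUnit_det Mr).mp h2
  have hMinv : M⁻¹ * M = 1 := Matrix.nonsing_inv_mul M hMdet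
  have hMinv' : M * M⁻¹ = 1 := Matrix.mul_nonsing_inv M hMdet
  have hMrinv : Mr⁻¹ * Mr = 1 := Matrix.nonsing_inv_mul Mr hMrdet
  have hN : (A - σ • E)⁻¹ = -(M⁻¹) := by
    rw [show A - σ • E = -M by simp [hM]]
    exact Matrix.inv_eq_right_inv (by rw [neg_mul_neg, hMinv'])
  have hMrM : Mr = Wᵀ * M * V := by
    simp [hMr, hM, Matrix.mul_sub, Matrix.sub_mul, Matrix.mul_smul, Matrix.smul_mul]
  have hVz : V *ᵥ (-z) = M⁻¹ *ᵥ (B *ᵥ b) := by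
    rw [Matrix.mulVec_neg, hz, hN, Matrix.neg_mulVec, neg_neg]
  have key : B *ᵥ b = M *ᵥ V *ᵥ (-z) := by
    rw [hVz, Matrix.mulVec_mulVec, hMinv', Matrix.one_mulVec]
  have hone : Mr⁻¹ * Wᵀ * M * V = 1 := by
    rw [Matrix.mul_assoc, Matrix.mul_assoc, ← Matrix.mul_assoc Wᵀ M V, ← hMrM, hMrinv]
  have hWr : Mr⁻¹ *ᵥ Wᵀ *ᵥ (B *ᵥ b) = -z := by
    rw [key]
    simp only [Matrix.mulVec_mulVec, ← Matrix.mul_assoc]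
    rw [hone, Matrix.one_mulVec]
  have lhs : (C * M⁻¹ * B) *ᵥ b = C *ᵥ V *ᵥ (-z) := by
    rw [hVz]; simp [Matrix.mul_assoc]
  have rhs : (C * V * Mr⁻¹ * (Wᵀ * B)) *ᵥ b = C *ᵥ V *ᵥ (-z) := by
    rw [← hWr]; simp [Matrix.mul_assoc]
  rw [Matrix.add_mulVec, Matrix.add_mulVec, lhs, rhs]
end

section
/- Under the same Petrov-Galerkin projection setup, if σ ∈ ℂ is not an eigenvalue of the pencils (E, A) and (E_r, A_r), and c is a vector such that (A - σE)^{-T} C^T c ∈ Range(W), then c^T G(σ) = c^T G_r(σ). -/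
open Matrix

/-- Petrov–Galerkin projection: left tangential interpolation. -/
theorem left_tangential_interpolation
    {n m p r : ℕ}
    (E A : Matrix (Fin n) (Fin n) ℂ) (B : Matrix (Fin n) (Fin m) ℂ)
    (C : Matrix (Fin p) (Fin n) ℂ) (D : Matrix (Fin p) (Fin m) ℂ)
    (V W : Matrix (Fin n) (Fin r) ℂ) (σ : ℂ) (c : Fin p → ℂ) (hc : c ≠ 0)
    (h1 : IsUnit (σ • E - A))
    (h2 : IsUnit (σ • (Wᵀ * E * V) - Wᵀ * A * V))
    (hx : ∃ z : Fin r → ℂ, W *ᵥ z = ((A - σ • E)ᵀ)⁻¹ *ᵥ (Cᵀ *ᵥ c)) :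
    c ᵥ* (C * (σ • E - A)⁻¹ * B + D)
      = c ᵥ* (C * V * (σ • (Wᵀ * E * V) - Wᵀ * A * V)⁻¹ * (Wᵀ * B) + D) := by
  obtain ⟨z, hz⟩ := hx
  set K := σ • E - A with hK
  set Kr := σ • (Wᵀ * E * V) - Wᵀ * A * V with hKr
  have hneg : A - σ • E = -K := by simp [hK]
  have hdetK : IsUnit K.det := (Matrix.isUnit_iff_isUnit_det K).mp h1
  have hdetKr : IsUnit Kr.det := (Matrix.isUnit_iff_isUnit_det Kr).mp h2
  have hdetT : IsUnit ((A - σ • E)ᵀ).det := by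
    rw [Matrix.det_transpose, hneg, Matrix.det_neg]
    exact (isUnit_one.neg.pow _).mul hdetK
  have hCc : Cᵀ *ᵥ c = (A - σ • E)ᵀ *ᵥ (W *ᵥ z) := by
    rw [hz, Matrix.mulVec_mulVec, Matrix.mul_nonsing_inv _ hdetT, Matrix.one_mulVec]
  have hrow : c ᵥ* C = (W *ᵥ z) ᵥ* (A - σ • E) := by
    rw [← Matrix.mulVec_transpose, hCc, Matrix.mulVec_transpose]
  have hu : W *ᵥ z = z ᵥ* Wᵀ := (Matrix.vecMul_transpose W z).symm
  have hL : (c ᵥ* C) ᵥ* K⁻¹ = -(W *ᵥ z) := by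
    rw [hrow, Matrix.vecMul_vecMul, hneg, Matrix.neg_mul,
      Matrix.mul_nonsing_inv _ hdetK, Matrix.vecMul_neg, Matrix.vecMul_one]
  have hM : Wᵀ * (A - σ • E) * V = -Kr := by
    simp [hKr, Matrix.mul_sub, Matrix.sub_mul, Matrix.mul_smul, Matrix.smul_mul,
      Matrix.mul_assoc, neg_sub]
  have h1' : (c ᵥ* C) ᵥ* V = -(z ᵥ* Kr) := by
    rw [hrow, hu, Matrix.vecMul_vecMul, Matrix.vecMul_vecMul, ← Matrix.mul_assoc, hM,
      Matrix.vecMul_neg]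
  have hR : ((c ᵥ* C) ᵥ* V) ᵥ* Kr⁻¹ = -z := by
    rw [h1', Matrix.neg_vecMul, Matrix.vecMul_vecMul,
      Matrix.mul_nonsing_inv _ hdetKr, Matrix.vecMul_one]
  have hWz : (-(W *ᵥ z)) ᵥ* B = (-z) ᵥ* (Wᵀ * B) := by
    rw [Matrix.neg_vecMul, Matrix.neg_vecMul, ← Matrix.vecMul_vecMul, ← hu]
  have lhsEq : c ᵥ* (C * K⁻¹ * B) = ((c ᵥ* C) ᵥ* K⁻¹) ᵥ* B := by
    simp [Matrix.vecMul_vecMul]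
  have rhsEq : c ᵥ* (C * V * Kr⁻¹ * (Wᵀ * B)) = (((c ᵥ* C) ᵥ* V) ᵥ* Kr⁻¹) ᵥ* (Wᵀ * B) := by
    simp [Matrix.vecMul_vecMul]
  rw [Matrix.vecMul_add, Matrix.vecMul_add]
  congr 1
  rw [lhsEq, rhsEq, hL, hR, hWz]
end

section
/- Under the Petrov-Galerkin projection setup, if both (A - σE)^{-1}Bb ∈ Range(V) and (A - σE)^{-T}C^T c ∈ Range(W) for the same shift σ, then the derivative of the transfer function is tangentially matched: c^T G'(σ) b = c^T G_r'(σ) b, where G'(s) = -C(sE-A)^{-1}E(sE-A)^{-1}B. -/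
open Matrix

/-- Petrov–Galerkin projection: Hermite (derivative) tangential interpolation. -/
theorem hermite_tangential_interpolation
    {n m p r : ℕ}
    (E A : Matrix (Fin n) (Fin n) ℂ) (B : Matrix (Fin n) (Fin m) ℂ)
    (C : Matrix (Fin p) (Fin n) ℂ) (D : Matrix (Fin p) (Fin m) ℂ)
    (V W : Matrix (Fin n) (Fin r) ℂ) (σ : ℂ)
    (b : Fin m → ℂ) (c : Fin p → ℂ) (hb : b ≠ 0) (hc : c ≠ 0)
    (h1 : IsUnit (σ • E - A))
    (h2 : IsUnit (σ • (Wᵀ * E * V) - Wᵀ * A * V))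
    (hxV : ∃ z : Fin r → ℂ, V *ᵥ z = (A - σ • E)⁻¹ *ᵥ (B *ᵥ b))
    (hxW : ∃ z : Fin r → ℂ, W *ᵥ z = ((A - σ • E)ᵀ)⁻¹ *ᵥ (Cᵀ *ᵥ c)) :
    c ⬝ᵥ ((-(C * (σ • E - A)⁻¹ * E * (σ • E - A)⁻¹ * B)) *ᵥ b)
      = c ⬝ᵥ ((-(C * V * (σ • (Wᵀ * E * V) - Wᵀ * A * V)⁻¹ * (Wᵀ * E * V) *
          (σ • (Wᵀ * E * V) - Wᵀ * A * V)⁻¹ * (Wᵀ * B))) *ᵥ b) := by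
  obtain ⟨z₁, hz₁⟩ := hxV
  obtain ⟨z₂, hz₂⟩ := hxW
  set K : Matrix (Fin n) (Fin n) ℂ := σ • E - A with hKdef
  set Kr : Matrix (Fin r) (Fin r) ℂ := σ • (Wᵀ * E * V) - Wᵀ * A * V with hKrdef
  have hdK : IsUnit K.det := (Matrix.isUnit_iff_isUnit_det _).mp h1
  have hdKr : IsUnit Kr.det := (Matrix.isUnit_iff_isUnit_det _).mp h2
  have hAσ : A - σ • E = -K := by rw [hKdef, neg_sub]
  have hu : IsUnit (A - σ • E) := by rw [hAσ]; exact h1.neg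
  have hd : IsUnit (A - σ • E).det := (Matrix.isUnit_iff_isUnit_det _).mp hu
  have huT : IsUnit ((A - σ • E)ᵀ).det := by rwa [Matrix.det_transpose]
  -- key projected matrix identity
  have key : Wᵀ * K * V = Kr := by
    rw [hKdef, hKrdef]
    simp [Matrix.mul_sub, Matrix.sub_mul, Matrix.mul_smul, Matrix.smul_mul, Matrix.mul_assoc]
  -- x := V *ᵥ (-z₁) satisfies K *ᵥ x = B *ᵥ b
  set x : Fin n → ℂ := V *ᵥ (-z₁) with hxdef
  have hx : K *ᵥ x = B *ᵥ b := by
    have hcan : (A - σ • E) *ᵥ ((A - σ • E)⁻¹ *ᵥ (B *ᵥ b)) = B *ᵥ b := by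
      rw [Matrix.mulVec_mulVec, Matrix.mul_nonsing_inv _ hd, Matrix.one_mulVec]
    have h : (A - σ • E) *ᵥ (V *ᵥ z₁) = B *ᵥ b := by rw [hz₁]; exact hcan
    rw [hAσ, Matrix.neg_mulVec] at h
    rw [hxdef, Matrix.mulVec_neg, Matrix.mulVec_neg]; exact h
  -- y := W *ᵥ (-z₂) satisfies Kᵀ *ᵥ y = Cᵀ *ᵥ c
  set y : Fin n → ℂ := W *ᵥ (-z₂) with hydef
  have hy : Kᵀ *ᵥ y = Cᵀ *ᵥ c := by
    have hcan : (A - σ • E)ᵀ *ᵥ (((A - σ • E)ᵀ)⁻¹ *ᵥ (Cᵀ *ᵥ c)) = Cᵀ *ᵥ c := by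
      rw [Matrix.mulVec_mulVec, Matrix.mul_nonsing_inv _ huT, Matrix.one_mulVec]
    have h : (A - σ • E)ᵀ *ᵥ (W *ᵥ z₂) = Cᵀ *ᵥ c := by rw [hz₂]; exact hcan
    rw [hAσ, Matrix.transpose_neg, Matrix.neg_mulVec] at h
    rw [hydef, Matrix.mulVec_neg, Matrix.mulVec_neg]; exact h
  -- auxiliary: K⁻¹ *ᵥ (B *ᵥ b) = x
  have hKinvB : K⁻¹ *ᵥ (B *ᵥ b) = x := by
    rw [← hx, Matrix.mulVec_mulVec, Matrix.nonsing_inv_mul _ hdK, Matrix.one_mulVec]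
  -- auxiliary : Kr⁻¹ *ᵥ (Wᵀ *ᵥ (B *ᵥ b)) = -z₁
  have hKrinv : Kr⁻¹ *ᵥ (Wᵀ *ᵥ (B *ᵥ b)) = -z₁ := by
    have hone : Kr⁻¹ * Wᵀ * K * V = 1 := by
      rw [Matrix.mul_assoc (Kr⁻¹ * Wᵀ) K V, Matrix.mul_assoc Kr⁻¹ Wᵀ (K * V),
        ← Matrix.mul_assoc Wᵀ K V, key, Matrix.nonsing_inv_mul _ hdKr]
    conv_lhs => rw [← hx, hxdef]
    simp only [Matrix.mulVec_mulVec]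
    rw [← Matrix.mul_assoc, ← Matrix.mul_assoc, hone, Matrix.one_mulVec]
  -- compute LHS
  have lhs_eq : c ⬝ᵥ ((C * K⁻¹ * E * K⁻¹ * B) *ᵥ b) = y ⬝ᵥ (E *ᵥ x) := by
    have expand : (C * K⁻¹ * E * K⁻¹ * B) *ᵥ b
        = C *ᵥ (K⁻¹ *ᵥ (E *ᵥ (K⁻¹ *ᵥ (B *ᵥ b)))) := by
      simp only [Matrix.mulVec_mulVec, Matrix.mul_assoc]
    rw [expand, hKinvB, Matrix.dotProduct_mulVec, ← Matrix.mulVec_transpose, ← hy,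
      Matrix.mulVec_transpose, ← Matrix.dotProduct_mulVec,
      Matrix.mulVec_mulVec, Matrix.mul_nonsing_inv _ hdK, Matrix.one_mulVec]
  -- compute RHS
  have rhs_eq : c ⬝ᵥ ((C * V * Kr⁻¹ * (Wᵀ * E * V) * Kr⁻¹ * (Wᵀ * B)) *ᵥ b)
      = y ⬝ᵥ (E *ᵥ x) := by
    have expand : (C * V * Kr⁻¹ * (Wᵀ * E * V) * Kr⁻¹ * (Wᵀ * B)) *ᵥ b
        = C *ᵥ (V *ᵥ (Kr⁻¹ *ᵥ ((Wᵀ * E * V) *ᵥ (Kr⁻¹ *ᵥ (Wᵀ *ᵥ (B *ᵥ b)))))) := by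
      simp only [Matrix.mulVec_mulVec, Matrix.mul_assoc]
    have step1 : (Wᵀ * E * V) *ᵥ (-z₁) = Wᵀ *ᵥ (E *ᵥ x) := by
      rw [hxdef]
      simp only [Matrix.mulVec_mulVec, Matrix.mul_assoc]
    have mkey : Wᵀ * (K * (V * (Kr⁻¹ * (Wᵀ * E)))) = Wᵀ * E := by
      simp only [← Matrix.mul_assoc]
      rw [key, Matrix.mul_nonsing_inv _ hdKr, Matrix.one_mul]
    rw [expand, hKrinv, step1, Matrix.dotProduct_mulVec, ← Matrix.mulVec_transpose, ← hy,
      Matrix.mulVec_transpose, ← Matrix.dotProduct_mulVec, hydef,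
      ← Matrix.vecMul_transpose, Matrix.dotProduct_mulVec,
      ← Matrix.dotProduct_mulVec, ← Matrix.dotProduct_mulVec, ← Matrix.dotProduct_mulVec]
    -- now: -z₂ ⬝ᵥ (Wᵀ *ᵥ (K *ᵥ (V *ᵥ (Kr⁻¹ *ᵥ (Wᵀ *ᵥ (E *ᵥ x)))))) = -z₂ ⬝ᵥ (Wᵀ *ᵥ (E *ᵥ x))
    simp only [Matrix.mulVec_mulVec]
    simp only [← Matrix.mul_assoc] at mkey ⊢
    rw [mkey]
  rw [Matrix.neg_mulVec, Matrix.neg_mulVec, dotProduct_neg, dotProduct_neg,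
    lhs_eq, rhs_eq]
end

section
/- Let G_r^0(s) = C_r(sE_r - A_r)^{-1}B_r be a reduced model obtained by Petrov-Galerkin projection with primitive interpolatory bases V, W, and let R, L be the tangent direction matrices from the associated Sylvester equations. Then for any matrix D_r ∈ ℂ^{p×m}, the perturbed model G_r^{D_r}(s) = (C_r + D_r R)(sE_r - (A_r + L^T D_r R))^{-1}(B_r + L^T D_r) + D_r satisfies the same right tangential interpolation conditions: G(σ_i) b_i = G_r^{D_r}(σ_i) b_i for each i. -/
open Matrix

/-- The `D_r`-shifted reduced model built on primitive interpolatory bases satisfies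
the same right tangential interpolation conditions for every `D_r`. -/
theorem shifted_model_right_interpolation
    {n m p r : ℕ}
    (E A : Matrix (Fin n) (Fin n) ℂ) (B : Matrix (Fin n) (Fin m) ℂ)
    (C : Matrix (Fin p) (Fin n) ℂ)
    (σ μ : Fin r → ℂ) (b : Fin r → Fin m → ℂ) (c : Fin r → Fin p → ℂ)
    (hσ : ∀ i, IsUnit (A - σ i • E)) (hμ : ∀ i, IsUnit (A - μ i • E))
    (V W : Matrix (Fin n) (Fin r) ℂ)
    (hV : ∀ i j, V j i = ((A - σ i • E)⁻¹ *ᵥ (B *ᵥ b i)) j)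
    (hW : ∀ i j, W j i = (((A - μ i • E)ᵀ)⁻¹ *ᵥ (Cᵀ *ᵥ c i)) j)
    (R : Matrix (Fin m) (Fin r) ℂ) (L : Matrix (Fin p) (Fin r) ℂ)
    (hR : ∀ k i, R k i = b i k) (hL : ∀ k i, L k i = c i k)
    (Dr : Matrix (Fin p) (Fin m) ℂ)
    (hinv : ∀ i, IsUnit (σ i • (Wᵀ * E * V) - (Wᵀ * A * V + Lᵀ * Dr * R))) :
    ∀ i, (C * (σ i • E - A)⁻¹ * B) *ᵥ b i
      = ((C * V + Dr * R) * (σ i • (Wᵀ * E * V) - (Wᵀ * A * V + Lᵀ * Dr * R))⁻¹ *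
          (Wᵀ * B + Lᵀ * Dr) + Dr) *ᵥ b i := by
  intro i
  set M : Matrix (Fin r) (Fin r) ℂ :=
    σ i • (Wᵀ * E * V) - (Wᵀ * A * V + Lᵀ * Dr * R) with hM
  set e : Fin r → ℂ := Pi.single i 1 with he
  set vi : Fin n → ℂ := fun j => V j i with hvi
  have hdet : IsUnit (A - σ i • E).det := (Matrix.isUnit_iff_isUnit_det _).mp (hσ i)
  have hMdet : IsUnit M.det := (Matrix.isUnit_iff_isUnit_det _).mp (hinv i)
  have hVcol : V *ᵥ e = vi := by
    funext j
    simp [he, Matrix.mulVec_single, hvi]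
  have hRcol : R *ᵥ e = b i := by
    funext k
    simp [he, Matrix.mulVec_single, hR k i]
  have hvi_eq : vi = (A - σ i • E)⁻¹ *ᵥ (B *ᵥ b i) := funext fun j => hV i j
  have hneg1 : (σ i • E - A) * (A - σ i • E)⁻¹ = -1 := by
    rw [← neg_sub, Matrix.neg_mul, Matrix.mul_nonsing_inv _ hdet]
  have key1 : (σ i • E - A) *ᵥ vi = -(B *ᵥ b i) := by
    rw [hvi_eq, Matrix.mulVec_mulVec, hneg1, Matrix.neg_mulVec, Matrix.one_mulVec]
  -- M *ᵥ e = -((Wᵀ*B + Lᵀ*Dr) *ᵥ b i)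
  have hMe : M *ᵥ e = -((Wᵀ * B + Lᵀ * Dr) *ᵥ b i) := by
    have h1 : (σ i • (Wᵀ * E * V) - Wᵀ * A * V) *ᵥ e = Wᵀ *ᵥ ((σ i • E - A) *ᵥ vi) := by
      rw [Matrix.sub_mulVec, Matrix.smul_mulVec]
      have hE : (Wᵀ * E * V) *ᵥ e = Wᵀ *ᵥ (E *ᵥ vi) := by
        rw [← hVcol, ← Matrix.mulVec_mulVec, ← Matrix.mulVec_mulVec]
      have hA : (Wᵀ * A * V) *ᵥ e = Wᵀ *ᵥ (A *ᵥ vi) := by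
        rw [← hVcol, ← Matrix.mulVec_mulVec, ← Matrix.mulVec_mulVec]
      rw [hE, hA]
      simp [Matrix.mulVec_sub, Matrix.mulVec_smul, Matrix.sub_mulVec, Matrix.smul_mulVec]
    have h2 : (Lᵀ * Dr * R) *ᵥ e = (Lᵀ * Dr) *ᵥ b i := by
      rw [← hRcol, ← Matrix.mulVec_mulVec]
    calc M *ᵥ e = (σ i • (Wᵀ * E * V) - Wᵀ * A * V) *ᵥ e - (Lᵀ * Dr * R) *ᵥ e := by
          rw [hM, ← Matrix.sub_mulVec]; congr 1; abel
      _ = Wᵀ *ᵥ ((σ i • E - A) *ᵥ vi) - (Lᵀ * Dr) *ᵥ b i := by rw [h1, h2]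
      _ = -((Wᵀ * B + Lᵀ * Dr) *ᵥ b i) := by
          simp only [key1, Matrix.mulVec_neg, Matrix.add_mulVec, ← Matrix.mulVec_mulVec]
          abel
  have hMinv : M⁻¹ *ᵥ ((Wᵀ * B + Lᵀ * Dr) *ᵥ b i) = -e := by
    have : M *ᵥ (-e) = (Wᵀ * B + Lᵀ * Dr) *ᵥ b i := by
      rw [Matrix.mulVec_neg, hMe, neg_neg]
    rw [← this, Matrix.mulVec_mulVec, Matrix.nonsing_inv_mul _ hMdet, Matrix.one_mulVec]
  -- LHS
  have hLHS : (C * (σ i • E - A)⁻¹ * B) *ᵥ b i = -(C *ᵥ vi) := by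
    have hinvneg : (σ i • E - A)⁻¹ = -(A - σ i • E)⁻¹ := by
      apply Matrix.inv_eq_right_inv
      rw [Matrix.mul_neg, ← Matrix.neg_mul, neg_sub, Matrix.mul_nonsing_inv _ hdet]
    rw [← Matrix.mulVec_mulVec, ← Matrix.mulVec_mulVec, hinvneg, Matrix.neg_mulVec,
      Matrix.mulVec_neg, ← hvi_eq]
  -- RHS
  have hRHS : ((C * V + Dr * R) * M⁻¹ * (Wᵀ * B + Lᵀ * Dr) + Dr) *ᵥ b i = -(C *ᵥ vi) := by
    rw [Matrix.add_mulVec, ← Matrix.mulVec_mulVec, ← Matrix.mulVec_mulVec, hMinv,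
      Matrix.mulVec_neg, Matrix.add_mulVec, ← Matrix.mulVec_mulVec, hVcol,
      ← Matrix.mulVec_mulVec, hRcol]
    abel
  rw [hLHS, ← hRHS]
end

section
/- With the same setup, for any D_r ∈ ℂ^{p×m}, the perturbed model G_r^{D_r} also satisfies the left tangential interpolation conditions: c_i^T G(μ_i) = c_i^T G_r^{D_r}(μ_i) for each i. -/
/-!
The columns of `W` solve the left primitive equations `wᵢ (A - μᵢ E) = cᵢᵀ C`, so
`cᵢᵀ G(μᵢ) = -wᵢ B`. Compressing the same identity by `V` shows that
`cᵢᵀ (C_r + D_r R) = -eᵢᵀ (μᵢ E_r - A_r - Lᵀ D_r R)`, because `cᵢᵀ = eᵢᵀ Lᵀ`; hence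
`cᵢᵀ G_r^{D_r}(μᵢ) = -eᵢᵀ (B_r + Lᵀ D_r) + cᵢᵀ D_r = -wᵢ B` as well, whatever `D_r` is.
-/

open Matrix

section LeftTangential

variable {α : Type*} [CommRing α] {ι κ ν ρ τ : Type*} [Fintype ι] [Fintype κ] [Fintype ρ]
  [Fintype τ]

theorem vecMul_mul_nonsing_inv_mul_of_vecMul_eq [DecidableEq ι] {K : Matrix ι ι α}
    (hK : IsUnit K.det) {C : Matrix κ ι α} {c : κ → α} {w : ι → α} (h : c ᵥ* C = w ᵥ* K)
    (B : Matrix ι ν α) :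
    c ᵥ* (C * K⁻¹ * B) = w ᵥ* B := by
  rw [Matrix.mul_assoc, ← vecMul_vecMul, h, vecMul_vecMul, ← Matrix.mul_assoc,
    mul_nonsing_inv _ hK, Matrix.one_mul]

theorem vecMul_eq_of_eq_transpose_inv_mulVec [DecidableEq ι] {K : Matrix ι ι α}
    (hK : IsUnit K.det) {C : Matrix κ ι α} {c : κ → α} {w : ι → α}
    (hw : w = Kᵀ⁻¹ *ᵥ (Cᵀ *ᵥ c)) :
    w ᵥ* K = c ᵥ* C := by
  have hKt : IsUnit Kᵀ.det := by rwa [det_transpose]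
  rw [← mulVec_transpose, hw, mulVec_mulVec, mul_nonsing_inv _ hKt, one_mulVec, mulVec_transpose]

theorem vecMul_reduced_output_eq_neg_vecMul_reduced_pencil (E A : Matrix ι ι α)
    (C : Matrix κ ι α) (V W : Matrix ι ρ α) (L : Matrix κ ρ α) (Dr : Matrix κ τ α)
    (R : Matrix τ ρ α) (s : α) {u : ρ → α} {c : κ → α}
    (hw : (u ᵥ* Wᵀ) ᵥ* (A - s • E) = c ᵥ* C) (hc : u ᵥ* Lᵀ = c) :
    c ᵥ* (C * V + Dr * R) = (-u) ᵥ* (s • (Wᵀ * E * V) - (Wᵀ * A * V + Lᵀ * Dr * R)) := by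
  rw [vecMul_add, ← vecMul_vecMul, ← hw, ← hc]
  simp only [vecMul_vecMul]
  rw [← vecMul_add, neg_vecMul, ← vecMul_neg]
  congr 1
  rw [Matrix.mul_sub, Matrix.sub_mul, Matrix.mul_smul, Matrix.smul_mul, Matrix.mul_assoc Lᵀ]
  abel

theorem vecMul_transfer_eq_vecMul_shifted_reduced_transfer [DecidableEq ι] [DecidableEq ρ]
    (E A : Matrix ι ι α) (B : Matrix ι τ α) (C : Matrix κ ι α) (V W : Matrix ι ρ α)
    (L : Matrix κ ρ α) (Dr : Matrix κ τ α) (R : Matrix τ ρ α) (s : α) {u : ρ → α} {c : κ → α}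
    (hK : IsUnit (s • E - A).det)
    (hKr : IsUnit (s • (Wᵀ * E * V) - (Wᵀ * A * V + Lᵀ * Dr * R)).det)
    (hw : (u ᵥ* Wᵀ) ᵥ* (A - s • E) = c ᵥ* C) (hc : u ᵥ* Lᵀ = c) :
    c ᵥ* (C * (s • E - A)⁻¹ * B)
      = c ᵥ* ((C * V + Dr * R) * (s • (Wᵀ * E * V) - (Wᵀ * A * V + Lᵀ * Dr * R))⁻¹ *
          (Wᵀ * B + Lᵀ * Dr) + Dr) := by
  have hfull : c ᵥ* C = (-(u ᵥ* Wᵀ)) ᵥ* (s • E - A) := by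
    rw [← hw, neg_vecMul, ← vecMul_neg, neg_sub]
  have hreduced := vecMul_reduced_output_eq_neg_vecMul_reduced_pencil E A C V W L Dr R s hw hc
  rw [vecMul_mul_nonsing_inv_mul_of_vecMul_eq hK hfull, vecMul_add,
    vecMul_mul_nonsing_inv_mul_of_vecMul_eq hKr hreduced,
    neg_vecMul, neg_vecMul, vecMul_add, ← vecMul_vecMul u Lᵀ Dr, hc, vecMul_vecMul]
  abel

end LeftTangential

theorem shifted_model_left_interpolation_general
    {n m p r : ℕ}
    (E A : Matrix (Fin n) (Fin n) ℂ) (B : Matrix (Fin n) (Fin m) ℂ)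
    (C : Matrix (Fin p) (Fin n) ℂ)
    (μ : Fin r → ℂ) (c : Fin r → Fin p → ℂ)
    (hμ : ∀ i, IsUnit (A - μ i • E))
    (V W : Matrix (Fin n) (Fin r) ℂ)
    (hW : ∀ i j, W j i = (((A - μ i • E)ᵀ)⁻¹ *ᵥ (Cᵀ *ᵥ c i)) j)
    (R : Matrix (Fin m) (Fin r) ℂ) (L : Matrix (Fin p) (Fin r) ℂ)
    (hL : ∀ k i, L k i = c i k)
    (Dr : Matrix (Fin p) (Fin m) ℂ)
    (hinv : ∀ i, IsUnit (μ i • (Wᵀ * E * V) - (Wᵀ * A * V + Lᵀ * Dr * R))) :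
    ∀ i, c i ᵥ* (C * (μ i • E - A)⁻¹ * B)
      = c i ᵥ* ((C * V + Dr * R) * (μ i • (Wᵀ * E * V) - (Wᵀ * A * V + Lᵀ * Dr * R))⁻¹ *
          (Wᵀ * B + Lᵀ * Dr) + Dr) := by
  intro i
  have hK : IsUnit (μ i • E - A).det := by
    rw [← isUnit_iff_isUnit_det, ← neg_sub]
    exact (hμ i).neg
  have hcol : Pi.single i 1 ᵥ* Wᵀ = ((A - μ i • E)ᵀ)⁻¹ *ᵥ (Cᵀ *ᵥ c i) := by
    rw [single_one_vecMul]
    exact funext (hW i)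
  have hc : Pi.single i 1 ᵥ* Lᵀ = c i := by
    rw [single_one_vecMul]
    exact funext fun k => hL k i
  exact vecMul_transfer_eq_vecMul_shifted_reduced_transfer E A B C V W L Dr R (μ i) hK
    ((isUnit_iff_isUnit_det _).mp (hinv i))
    (vecMul_eq_of_eq_transpose_inv_mulVec ((isUnit_iff_isUnit_det _).mp (hμ i)) hcol) hc

/-- The `D_r`-shifted reduced model built on primitive interpolatory bases satisfies
the same left tangential interpolation conditions for every `D_r`. -/
theorem shifted_model_left_interpolation
    {n m p r : ℕ}
    (E A : Matrix (Fin n) (Fin n) ℂ) (B : Matrix (Fin n) (Fin m) ℂ)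
    (C : Matrix (Fin p) (Fin n) ℂ)
    (σ μ : Fin r → ℂ) (b : Fin r → Fin m → ℂ) (c : Fin r → Fin p → ℂ)
    (hσ : ∀ i, IsUnit (A - σ i • E)) (hμ : ∀ i, IsUnit (A - μ i • E))
    (V W : Matrix (Fin n) (Fin r) ℂ)
    (hV : ∀ i j, V j i = ((A - σ i • E)⁻¹ *ᵥ (B *ᵥ b i)) j)
    (hW : ∀ i j, W j i = (((A - μ i • E)ᵀ)⁻¹ *ᵥ (Cᵀ *ᵥ c i)) j)
    (R : Matrix (Fin m) (Fin r) ℂ) (L : Matrix (Fin p) (Fin r) ℂ)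
    (hR : ∀ k i, R k i = b i k) (hL : ∀ k i, L k i = c i k)
    (Dr : Matrix (Fin p) (Fin m) ℂ)
    (hinv : ∀ i, IsUnit (μ i • (Wᵀ * E * V) - (Wᵀ * A * V + Lᵀ * Dr * R))) :
    ∀ i, c i ᵥ* (C * (μ i • E - A)⁻¹ * B)
      = c i ᵥ* ((C * V + Dr * R) * (μ i • (Wᵀ * E * V) - (Wᵀ * A * V + Lᵀ * Dr * R))⁻¹ *
          (Wᵀ * B + Lᵀ * Dr) + Dr) :=
  shifted_model_left_interpolation_general E A B C μ c hμ V W hW R L hL Dr hinv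
end

section
/- The D_r-shifted reduced transfer function decomposes as G_r^{D_r}(s) = G_r^0(s) + Δ₁ + Δ₂ + Δ₃(Δ₄)^{-1}Δ₂ + D_r, where Δ₁ = C_r Δ(s)^{-1}L^T D_r, Δ₂ = D_r R Δ(s)^{-1}(B_r + L^T D_r), Δ₃ = (C_r + D_r R)Δ(s)^{-1}L^T, Δ₄ = I - D_r R Δ(s)^{-1}L^T, Δ(s) = sE_r - A_r, and G_r^0(s) = C_r Δ(s)^{-1}B_r. -/
open Matrix

set_option maxHeartbeats 1000000 in
/-- Woodbury-style helper with opaque inverses `Y` and `Z`. -/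
theorem shifted_model_decomposition_aux
    {r m p : ℕ}
    (Δ Y : Matrix (Fin r) (Fin r) ℂ)
    (Br : Matrix (Fin r) (Fin m) ℂ) (Cr : Matrix (Fin p) (Fin r) ℂ)
    (R : Matrix (Fin m) (Fin r) ℂ) (L : Matrix (Fin p) (Fin r) ℂ)
    (Dr : Matrix (Fin p) (Fin m) ℂ)
    (Z : Matrix (Fin p) (Fin p) ℂ)
    (h1 : Δ * Y = 1)
    (hz : ((1 : Matrix (Fin p) (Fin p) ℂ) - Dr * R * Y * Lᵀ) * Z = 1) :
    (Cr + Dr * R) * (Δ - Lᵀ * Dr * R)⁻¹ * (Br + Lᵀ * Dr) + Dr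
      = Cr * Y * Br
        + Cr * Y * Lᵀ * Dr
        + Dr * R * Y * (Br + Lᵀ * Dr)
        + ((Cr + Dr * R) * Y * Lᵀ) * Z * (Dr * R * Y * (Br + Lᵀ * Dr))
        + Dr := by
  have hz' : Dr * R * Y * Lᵀ * Z = Z - 1 := by
    rw [sub_mul, one_mul] at hz
    rw [← hz]; abel
  have h1' : ∀ {n : Type} (X : Matrix (Fin r) n ℂ), Δ * (Y * X) = X := fun X => by
    rw [← Matrix.mul_assoc, h1, Matrix.one_mul]
  have hz'' : ∀ {n : Type} (X : Matrix (Fin p) n ℂ),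
      Dr * (R * (Y * (Lᵀ * (Z * X)))) = Z * X - X := fun X => by
    calc Dr * (R * (Y * (Lᵀ * (Z * X)))) = (Dr * R * Y * Lᵀ * Z) * X := by
          simp only [Matrix.mul_assoc]
      _ = Z * X - X := by rw [hz', Matrix.sub_mul, Matrix.one_mul]
  have hinv : (Δ - Lᵀ * Dr * R)⁻¹ = Y + Y * Lᵀ * Z * (Dr * R * Y) := by
    apply inv_eq_right_inv
    simp only [Matrix.sub_mul, Matrix.mul_add, Matrix.mul_sub, Matrix.mul_assoc, h1, h1', hz'']
    abel
  rw [hinv]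
  simp only [Matrix.mul_add, Matrix.add_mul, Matrix.mul_assoc]
  abel

set_option maxHeartbeats 1000000 in
/-- Decomposition of the `D_r`-shifted reduced transfer function:
`G_r^{D_r}(s) = G_r^0(s) + Δ₁ + Δ₂ + Δ₃ Δ₄⁻¹ Δ₂ + D_r`. -/
theorem shifted_model_decomposition
    {r m p : ℕ}
    (Er Ar : Matrix (Fin r) (Fin r) ℂ)
    (Br : Matrix (Fin r) (Fin m) ℂ) (Cr : Matrix (Fin p) (Fin r) ℂ)
    (R : Matrix (Fin m) (Fin r) ℂ) (L : Matrix (Fin p) (Fin r) ℂ)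
    (Dr : Matrix (Fin p) (Fin m) ℂ) (s : ℂ)
    (hΔ : IsUnit (s • Er - Ar))
    (h4 : IsUnit ((1 : Matrix (Fin p) (Fin p) ℂ) - Dr * R * (s • Er - Ar)⁻¹ * Lᵀ)) :
    (Cr + Dr * R) * (s • Er - (Ar + Lᵀ * Dr * R))⁻¹ * (Br + Lᵀ * Dr) + Dr
      = Cr * (s • Er - Ar)⁻¹ * Br
        + Cr * (s • Er - Ar)⁻¹ * Lᵀ * Dr
        + Dr * R * (s • Er - Ar)⁻¹ * (Br + Lᵀ * Dr)
        + ((Cr + Dr * R) * (s • Er - Ar)⁻¹ * Lᵀ) *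
            ((1 : Matrix (Fin p) (Fin p) ℂ) - Dr * R * (s • Er - Ar)⁻¹ * Lᵀ)⁻¹ *
            (Dr * R * (s • Er - Ar)⁻¹ * (Br + Lᵀ * Dr))
        + Dr := by
  have hrw : s • Er - (Ar + Lᵀ * Dr * R) = (s • Er - Ar) - Lᵀ * Dr * R := by
    noncomm_ring
  have h1 : (s • Er - Ar) * (s • Er - Ar)⁻¹ = 1 :=
    mul_nonsing_inv _ ((isUnit_iff_isUnit_det _).mp hΔ)
  have hz : ((1 : Matrix (Fin p) (Fin p) ℂ) - Dr * R * (s • Er - Ar)⁻¹ * Lᵀ) *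
      ((1 : Matrix (Fin p) (Fin p) ℂ) - Dr * R * (s • Er - Ar)⁻¹ * Lᵀ)⁻¹ = 1 :=
    mul_nonsing_inv _ ((isUnit_iff_isUnit_det _).mp h4)
  rw [hrw]
  exact shifted_model_decomposition_aux (s • Er - Ar) (s • Er - Ar)⁻¹ Br Cr R L Dr _ h1 hz
end

section
/- For the D_r-shifted reduced model built on Hermite interpolation data (σ_i = μ_i), the derivative conditions are preserved: c_i^T (G_r^{D_r})'(σ_i) b_i = c_i^T G'(σ_i) b_i for each i and every D_r for which the shifted pencil is invertible at σ_i. -/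
open Matrix

/-- For the `D_r`-shifted reduced model built on Hermite interpolation data
(`μᵢ = σᵢ`), the tangential derivative interpolation conditions are preserved
for every `D_r`. -/
theorem shifted_model_derivative_interpolation
    {n m p r : ℕ}
    (E A : Matrix (Fin n) (Fin n) ℂ) (B : Matrix (Fin n) (Fin m) ℂ)
    (C : Matrix (Fin p) (Fin n) ℂ)
    (σ : Fin r → ℂ) (b : Fin r → Fin m → ℂ) (c : Fin r → Fin p → ℂ)
    (hσ : ∀ i, IsUnit (A - σ i • E))
    (V W : Matrix (Fin n) (Fin r) ℂ)
    (hV : ∀ i j, V j i = ((A - σ i • E)⁻¹ *ᵥ (B *ᵥ b i)) j)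
    (hW : ∀ i j, W j i = (((A - σ i • E)ᵀ)⁻¹ *ᵥ (Cᵀ *ᵥ c i)) j)
    (R : Matrix (Fin m) (Fin r) ℂ) (L : Matrix (Fin p) (Fin r) ℂ)
    (hR : ∀ k i, R k i = b i k) (hL : ∀ k i, L k i = c i k)
    (Dr : Matrix (Fin p) (Fin m) ℂ)
    (hinv : ∀ i, IsUnit (σ i • (Wᵀ * E * V) - (Wᵀ * A * V + Lᵀ * Dr * R))) :
    ∀ i,
      c i ⬝ᵥ ((-(C * (σ i • E - A)⁻¹ * E * (σ i • E - A)⁻¹ * B)) *ᵥ b i)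
        = c i ⬝ᵥ ((-((C * V + Dr * R) *
              (σ i • (Wᵀ * E * V) - (Wᵀ * A * V + Lᵀ * Dr * R))⁻¹ * (Wᵀ * E * V) *
              (σ i • (Wᵀ * E * V) - (Wᵀ * A * V + Lᵀ * Dr * R))⁻¹ *
              (Wᵀ * B + Lᵀ * Dr))) *ᵥ b i) := by
  intro i
  -- notation
  set K : Matrix (Fin n) (Fin n) ℂ := σ i • E - A with hKdef
  set Kr : Matrix (Fin r) (Fin r) ℂ :=
    σ i • (Wᵀ * E * V) - (Wᵀ * A * V + Lᵀ * Dr * R) with hKrdef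
  have hKneg : A - σ i • E = -K := by rw [hKdef, neg_sub]
  have hKunit : IsUnit K := by
    have h := (hσ i).neg
    rwa [hKneg, neg_neg] at h
  have hKdet : IsUnit K.det := (Matrix.isUnit_iff_isUnit_det K).mp hKunit
  have hKTdet : IsUnit Kᵀ.det := by rwa [Matrix.det_transpose]
  have hKrdet : IsUnit Kr.det := (Matrix.isUnit_iff_isUnit_det Kr).mp (hinv i)
  have hKrTdet : IsUnit Krᵀ.det := by rwa [Matrix.det_transpose]
  set e : Fin r → ℂ := Pi.single i 1 with he
  set v : Fin n → ℂ := fun j => V j i with hv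
  set w : Fin n → ℂ := fun j => W j i with hw
  have hVe : V *ᵥ e = v := by
    ext j; simp [he, Matrix.mulVec_single, hv]
  have hWe : W *ᵥ e = w := by
    ext j; simp [he, Matrix.mulVec_single, hw]
  have hRe : R *ᵥ e = b i := by
    ext k; simp [he, Matrix.mulVec_single, hR]
  have hLe : L *ᵥ e = c i := by
    ext k; simp [he, Matrix.mulVec_single, hL]
  -- primitive interpolation identities
  have hAσdet : IsUnit (A - σ i • E).det := (Matrix.isUnit_iff_isUnit_det _).mp (hσ i)
  have hAσTdet : IsUnit ((A - σ i • E)ᵀ).det := by rwa [Matrix.det_transpose]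
  have hKv : K *ᵥ v = -(B *ᵥ b i) := by
    have hveq : v = (A - σ i • E)⁻¹ *ᵥ (B *ᵥ b i) := funext fun j => hV i j
    have h1 : (A - σ i • E) *ᵥ v = B *ᵥ b i := by
      rw [hveq, Matrix.mulVec_mulVec, Matrix.mul_nonsing_inv _ hAσdet,
        Matrix.one_mulVec]
    have hKT : K = -(A - σ i • E) := by rw [hKneg, neg_neg]
    rw [hKT, Matrix.neg_mulVec, h1]
  have hKw : Kᵀ *ᵥ w = -(Cᵀ *ᵥ c i) := by
    have hweq : w = ((A - σ i • E)ᵀ)⁻¹ *ᵥ (Cᵀ *ᵥ c i) := funext fun j => hW i j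
    have h1 : (A - σ i • E)ᵀ *ᵥ w = Cᵀ *ᵥ c i := by
      rw [hweq, Matrix.mulVec_mulVec, Matrix.mul_nonsing_inv _ hAσTdet,
        Matrix.one_mulVec]
    have hKT : Kᵀ = -((A - σ i • E)ᵀ) := by
      rw [hKneg, Matrix.transpose_neg, neg_neg]
    rw [hKT, Matrix.neg_mulVec, h1]
  -- structure of the reduced pencil
  have hKrstruct : Kr = Wᵀ * K * V - Lᵀ * Dr * R := by
    rw [hKrdef, hKdef]
    simp [Matrix.mul_sub, Matrix.sub_mul, Matrix.mul_smul, Matrix.smul_mul,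
      sub_sub, Matrix.mul_assoc]
  -- reduced interpolation identities
  have hKre : Kr *ᵥ e = -((Wᵀ * B + Lᵀ * Dr) *ᵥ b i) := by
    rw [hKrstruct, Matrix.sub_mulVec]
    have h1 : (Wᵀ * K * V) *ᵥ e = Wᵀ *ᵥ (K *ᵥ v) := by
      rw [← hVe, ← Matrix.mulVec_mulVec, ← Matrix.mulVec_mulVec]
    have h2 : (Lᵀ * Dr * R) *ᵥ e = Lᵀ *ᵥ (Dr *ᵥ (b i)) := by
      rw [← hRe, ← Matrix.mulVec_mulVec, ← Matrix.mulVec_mulVec]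
    rw [h1, h2, hKv, Matrix.mulVec_neg, Matrix.add_mulVec, ← Matrix.mulVec_mulVec,
      neg_add_rev, ← Matrix.mulVec_mulVec]
    abel
  have hKrTe : Krᵀ *ᵥ e = -((C * V + Dr * R)ᵀ *ᵥ c i) := by
    rw [hKrstruct]
    rw [Matrix.transpose_sub, Matrix.sub_mulVec, Matrix.transpose_mul,
      Matrix.transpose_mul, Matrix.transpose_mul, Matrix.transpose_mul]
    have h1 : (Vᵀ * (Kᵀ * Wᵀᵀ)) *ᵥ e = Vᵀ *ᵥ (Kᵀ *ᵥ w) := by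
      rw [Matrix.transpose_transpose, ← hWe, ← Matrix.mulVec_mulVec,
        ← Matrix.mulVec_mulVec, Matrix.mulVec_mulVec]
    have h2 : (Rᵀ * (Drᵀ * Lᵀᵀ)) *ᵥ e = Rᵀ *ᵥ (Drᵀ *ᵥ (c i)) := by
      rw [Matrix.transpose_transpose, ← hLe, ← Matrix.mulVec_mulVec,
        ← Matrix.mulVec_mulVec, Matrix.mulVec_mulVec]
    rw [h1, h2, hKw, Matrix.mulVec_neg, Matrix.transpose_add, Matrix.transpose_mul,
      Matrix.transpose_mul, Matrix.add_mulVec, ← Matrix.mulVec_mulVec, neg_add_rev,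
      ← Matrix.mulVec_mulVec]
    abel
  -- cancellation helpers
  have hKcan : ∀ x : Fin n → ℂ, K *ᵥ (K⁻¹ *ᵥ x) = x := fun x => by
    rw [Matrix.mulVec_mulVec, Matrix.mul_nonsing_inv _ hKdet, Matrix.one_mulVec]
  have hKinv : ∀ x : Fin n → ℂ, K⁻¹ *ᵥ (K *ᵥ x) = x := fun x => by
    rw [Matrix.mulVec_mulVec, Matrix.nonsing_inv_mul _ hKdet, Matrix.one_mulVec]
  have hKrinv : ∀ x : Fin r → ℂ, Kr⁻¹ *ᵥ (Kr *ᵥ x) = x := fun x => by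
    rw [Matrix.mulVec_mulVec, Matrix.nonsing_inv_mul _ hKrdet, Matrix.one_mulVec]
  -- LHS computation
  have hLHS : c i ⬝ᵥ ((-(C * K⁻¹ * E * K⁻¹ * B)) *ᵥ b i) = -(w ⬝ᵥ (E *ᵥ v)) := by
    have hBb : B *ᵥ b i = -(K *ᵥ v) := by rw [hKv, neg_neg]
    have hnest : (C * K⁻¹ * E * K⁻¹ * B) *ᵥ b i
        = C *ᵥ (K⁻¹ *ᵥ (E *ᵥ (K⁻¹ *ᵥ (B *ᵥ b i)))) := by
      simp [Matrix.mulVec_mulVec, Matrix.mul_assoc]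
    rw [Matrix.neg_mulVec, hnest, hBb, Matrix.mulVec_neg, hKinv, Matrix.mulVec_neg,
      Matrix.mulVec_neg, Matrix.mulVec_neg, dotProduct_neg, dotProduct_neg, neg_neg]
    rw [Matrix.dotProduct_mulVec, ← Matrix.mulVec_transpose]
    rw [← neg_neg (Cᵀ *ᵥ c i), ← hKw, neg_dotProduct, Matrix.mulVec_transpose,
      ← Matrix.dotProduct_mulVec, hKcan]
  have hRHS : c i ⬝ᵥ ((-((C * V + Dr * R) * Kr⁻¹ * (Wᵀ * E * V) * Kr⁻¹ *
      (Wᵀ * B + Lᵀ * Dr))) *ᵥ b i) = -(w ⬝ᵥ (E *ᵥ v)) := by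
    have hM2b : (Wᵀ * B + Lᵀ * Dr) *ᵥ b i = -(Kr *ᵥ e) := by rw [hKre, neg_neg]
    have hM1c : (C * V + Dr * R)ᵀ *ᵥ c i = -(Krᵀ *ᵥ e) := by rw [hKrTe, neg_neg]
    have hnest : ((C * V + Dr * R) * Kr⁻¹ * (Wᵀ * E * V) * Kr⁻¹ *
        (Wᵀ * B + Lᵀ * Dr)) *ᵥ b i
        = (C * V + Dr * R) *ᵥ (Kr⁻¹ *ᵥ ((Wᵀ * E * V) *ᵥ
            (Kr⁻¹ *ᵥ ((Wᵀ * B + Lᵀ * Dr) *ᵥ b i)))) := by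
      simp [Matrix.mulVec_mulVec, Matrix.mul_assoc]
    rw [Matrix.neg_mulVec, hnest, hM2b, Matrix.mulVec_neg, hKrinv, Matrix.mulVec_neg,
      Matrix.mulVec_neg, Matrix.mulVec_neg, dotProduct_neg, dotProduct_neg, neg_neg]
    rw [Matrix.dotProduct_mulVec, ← Matrix.mulVec_transpose, hM1c, neg_dotProduct,
      Matrix.mulVec_transpose, ← Matrix.dotProduct_mulVec]
    rw [show Kr *ᵥ (Kr⁻¹ *ᵥ ((Wᵀ * E * V) *ᵥ e)) = (Wᵀ * E * V) *ᵥ e from by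
      rw [Matrix.mulVec_mulVec, Matrix.mul_nonsing_inv _ hKrdet, Matrix.one_mulVec]]
    have h3 : (Wᵀ * E * V) *ᵥ e = Wᵀ *ᵥ (E *ᵥ v) := by
      rw [← hVe, ← Matrix.mulVec_mulVec, ← Matrix.mulVec_mulVec]
    rw [h3, Matrix.dotProduct_mulVec, Matrix.vecMul_transpose, hWe]
  rw [hLHS, hRHS]
end

section
/- If h ∈ L¹([0,∞), ℂ^{p×m}) (the system is BIBO stable) then its Laplace transform G(s) = ∫₀^∞ e^{-st}h(t)dt is analytic on the open right half-plane and sup_{Re s > 0} σ_max(G(s)) = sup_{ω∈ℝ} σ_max(G(jω)), i.e., the H∞ norm is attained as a supremum on the boundary (maximum modulus principle for matrix H∞ functions). -/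
open MeasureTheory Matrix

attribute [local instance] Matrix.normedAddCommGroup Matrix.normedSpace

/-- The largest singular value of a complex matrix, as the operator norm of the
induced map between Euclidean spaces. -/
noncomputable def sigmaMax {p m : ℕ} (M : Matrix (Fin p) (Fin m) ℂ) : ℝ :=
  ‖LinearMap.toContinuousLinearMap (Matrix.toEuclideanLin M)‖

/-!
For `Re s ≥ 0` the integrand `e^{-st} h(t)` is dominated by `‖h(t)‖`, so `G` is continuous and
bounded by `‖h‖₁` on the closed right half-plane; on `Re s > 0` the `s`-derivative
`-t e^{-st} h(t)` is dominated by `‖h(t)‖ / Re s` locally, so `G` is holomorphic there.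
Composing with the (continuous, linear) passage from a matrix to its Euclidean operator, whose
norm is `σ_max`, gives a bounded holomorphic function on the half-plane; Phragmén–Lindelöf bounds
it by its supremum on the imaginary axis, and every boundary value is a limit of interior ones.
-/

open Filter Set Complex

theorem Real.mul_exp_neg_mul_le_inv {c : ℝ} (hc : 0 < c) (t : ℝ) :
    t * Real.exp (-(c * t)) ≤ c⁻¹ := by
  have := Real.add_one_le_exp (c * t)
  rw [Real.exp_neg, ← div_eq_mul_inv, div_le_iff₀ (Real.exp_pos _), inv_mul_eq_div,
    le_div_iff₀ hc]
  linarith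

theorem Complex.norm_cexp_neg_mul_mul_le {s : ℂ} {c t : ℝ} (hc : 0 < c) (hcs : c ≤ s.re)
    (ht : 0 ≤ t) : ‖cexp (-s * t) * -t‖ ≤ c⁻¹ := by
  calc ‖cexp (-s * t) * -t‖ = t * Real.exp (-(s.re * t)) := by
        rw [norm_mul, norm_exp, norm_neg, norm_real, Real.norm_of_nonneg ht, mul_comm]; simp
    _ ≤ t * Real.exp (-(c * t)) := by gcongr
    _ ≤ c⁻¹ := Real.mul_exp_neg_mul_le_inv hc t

noncomputable section LaplaceTransform

variable {E : Type*} [NormedAddCommGroup E] [NormedSpace ℂ E] {f : ℝ → E}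

def laplaceTransform (f : ℝ → E) (s : ℂ) : E :=
  ∫ t in Ici (0 : ℝ), cexp (-s * t) • f t

theorem norm_cexp_neg_mul_smul (s : ℂ) (t : ℝ) (x : E) :
    ‖cexp (-s * t) • x‖ = Real.exp (-(s.re * t)) * ‖x‖ := by
  rw [norm_smul, norm_exp]
  simp

theorem norm_cexp_neg_mul_smul_le {s : ℂ} (hs : 0 ≤ s.re) {t : ℝ} (ht : 0 ≤ t) (x : E) :
    ‖cexp (-s * t) • x‖ ≤ ‖x‖ := by
  rw [norm_cexp_neg_mul_smul]
  exact mul_le_of_le_one_left (norm_nonneg x) (Real.exp_le_one_iff.2 (by nlinarith))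

theorem ae_norm_cexp_neg_mul_smul_le {s : ℂ} (hs : 0 ≤ s.re) :
    ∀ᵐ t : ℝ ∂volume.restrict (Ici (0 : ℝ)), ‖cexp (-s * t) • f t‖ ≤ ‖f t‖ :=
  (ae_restrict_iff' measurableSet_Ici).2 <| Eventually.of_forall fun _ ht =>
    norm_cexp_neg_mul_smul_le hs ht _

theorem MeasureTheory.AEStronglyMeasurable.cexp_neg_mul_smul {μ : Measure ℝ}
    (hf : AEStronglyMeasurable f μ) (s : ℂ) :
    AEStronglyMeasurable (fun t : ℝ => cexp (-s * t) • f t) μ :=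
  (Continuous.aestronglyMeasurable (by fun_prop)).smul hf

theorem MeasureTheory.IntegrableOn.cexp_neg_mul_smul (hf : IntegrableOn f (Ici 0)) {s : ℂ}
    (hs : 0 ≤ s.re) : IntegrableOn (fun t : ℝ => cexp (-s * t) • f t) (Ici 0) :=
  hf.norm.mono' (hf.1.cexp_neg_mul_smul s) (ae_norm_cexp_neg_mul_smul_le hs)

theorem norm_laplaceTransform_le (hf : IntegrableOn f (Ici 0)) {s : ℂ} (hs : 0 ≤ s.re) :
    ‖laplaceTransform f s‖ ≤ ∫ t in Ici 0, ‖f t‖ :=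
  (norm_integral_le_integral_norm _).trans <|
    integral_mono_ae (hf.cexp_neg_mul_smul hs).norm hf.norm (ae_norm_cexp_neg_mul_smul_le hs)

theorem continuousOn_laplaceTransform (hf : IntegrableOn f (Ici 0)) :
    ContinuousOn (laplaceTransform f) {s | 0 ≤ s.re} :=
  continuousOn_of_dominated (fun s _ => hf.1.cexp_neg_mul_smul s)
    (fun _ hs => ae_norm_cexp_neg_mul_smul_le hs) hf.norm
    (Eventually.of_forall fun _ => (by fun_prop : Continuous _).continuousOn)

theorem differentiableOn_laplaceTransform (hf : IntegrableOn f (Ici 0)) :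
    DifferentiableOn ℂ (laplaceTransform f) {s | 0 < s.re} := by
  intro s₀ (hs₀ : 0 < s₀.re)
  have hr : 0 < s₀.re / 2 := half_pos hs₀
  have hre : ∀ s ∈ Metric.ball s₀ (s₀.re / 2), s₀.re / 2 ≤ s.re := fun s hs => by
    have := (abs_le.1 ((abs_re_le_norm (s - s₀)).trans (mem_ball_iff_norm.1 hs).le)).1
    rw [sub_re] at this
    linarith
  have hbound : ∀ᵐ t : ℝ ∂volume.restrict (Ici (0 : ℝ)),
      ∀ s ∈ Metric.ball s₀ (s₀.re / 2), ‖(cexp (-s * t) * -t) • f t‖ ≤ (s₀.re / 2)⁻¹ * ‖f t‖ :=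
    (ae_restrict_iff' measurableSet_Ici).2 <| Eventually.of_forall fun t (ht : 0 ≤ t) s hs => by
      rw [norm_smul]
      gcongr
      exact norm_cexp_neg_mul_mul_le hr (hre s hs) ht
  have hderiv : ∀ᵐ t : ℝ ∂volume.restrict (Ici (0 : ℝ)),
      ∀ s ∈ Metric.ball s₀ (s₀.re / 2),
        HasDerivAt (fun s : ℂ => cexp (-s * t) • f t) ((cexp (-s * t) * -t) • f t) s :=
    Eventually.of_forall fun t s _ => by
      simpa using (((hasDerivAt_id s).neg.mul_const (t : ℂ)).cexp).smul_const (f t)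
  obtain ⟨-, hd⟩ := hasDerivAt_integral_of_dominated_loc_of_deriv_le
    (Metric.ball_mem_nhds s₀ hr) (Eventually.of_forall hf.1.cexp_neg_mul_smul)
    (hf.cexp_neg_mul_smul hs₀.le) ((Continuous.aestronglyMeasurable (by fun_prop)).smul hf.1)
    hbound (hf.norm.const_mul _) hderiv
  exact hd.differentiableAt.differentiableWithinAt

theorem diffContOnCl_laplaceTransform (hf : IntegrableOn f (Ici 0)) :
    DiffContOnCl ℂ (laplaceTransform f) {s | 0 < s.re} :=
  ⟨differentiableOn_laplaceTransform hf,
    closure_setOfPred_lt_re 0 ▸ continuousOn_laplaceTransform hf⟩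

end LaplaceTransform

theorem le_iSup_rightHalfPlane_of_continuousOn {g : ℂ → ℝ}
    (hg : ContinuousOn g {z | 0 ≤ z.re})
    (hbdd : BddAbove (range fun s : {s : ℂ // 0 < s.re} => g s)) {z : ℂ} (hz : 0 ≤ z.re) :
    g z ≤ ⨆ s : {s : ℂ // 0 < s.re}, g s :=
  ContinuousWithinAt.closure_le (closure_setOfPred_lt_re 0 ▸ hz)
    ((hg z hz).mono fun s (hs : 0 < s.re) => hs.le) continuousWithinAt_const
    fun s hs => le_ciSup hbdd ⟨s, hs⟩

section MaximumModulus

variable {E : Type*} [NormedAddCommGroup E] [NormedSpace ℂ E] {F : ℂ → E} {C : ℝ}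

theorem norm_le_iSup_norm_imaginaryAxis (hF : DiffContOnCl ℂ F {z | 0 < z.re})
    (hC : ∀ z : ℂ, 0 ≤ z.re → ‖F z‖ ≤ C) {z : ℂ} (hz : 0 ≤ z.re) :
    ‖F z‖ ≤ ⨆ ω : ℝ, ‖F (I * ω)‖ := by
  have hbdd : BddAbove (range fun ω : ℝ => ‖F (I * ω)‖) :=
    ⟨C, forall_mem_range.2 fun ω => hC _ (by simp)⟩
  refine PhragmenLindelof.right_half_plane_of_bounded_on_real hF ⟨1, one_lt_two, 0, ?_⟩
    ⟨C, eventually_map.2 <| (eventually_ge_atTop 0).mono fun x hx => hC x (by simpa)⟩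
    (fun ω => mul_comm (ω : ℂ) I ▸ le_ciSup hbdd ω) hz
  simp only [zero_mul, Real.exp_zero]
  exact (Asymptotics.isBigO_one_iff ℝ).2 <| isBoundedUnder_of_eventually_le (a := C) <|
    eventually_inf_principal.2 <| Eventually.of_forall fun w hw => hC w (le_of_lt hw)

theorem iSup_norm_rightHalfPlane_eq_iSup_norm_imaginaryAxis
    (hF : DiffContOnCl ℂ F {z | 0 < z.re}) (hC : ∀ z : ℂ, 0 ≤ z.re → ‖F z‖ ≤ C) :
    ⨆ s : {s : ℂ // 0 < s.re}, ‖F s‖ = ⨆ ω : ℝ, ‖F (I * ω)‖ := by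
  have hcont : ContinuousOn F {z | 0 ≤ z.re} := closure_setOfPred_lt_re 0 ▸ hF.continuousOn
  have : Nonempty {s : ℂ // 0 < s.re} := ⟨⟨1, one_pos⟩⟩
  refine le_antisymm (ciSup_le fun s => norm_le_iSup_norm_imaginaryAxis hF hC s.2.le) ?_
  exact ciSup_le fun ω => le_iSup_rightHalfPlane_of_continuousOn hcont.norm
    ⟨C, forall_mem_range.2 fun s => hC s s.2.le⟩ (by simp)

end MaximumModulus

noncomputable def Matrix.toEuclideanContinuousLinearMap {𝕜 : Type*} [RCLike 𝕜] {m n : Type*}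
    [Fintype m] [Fintype n] [DecidableEq n] :
    Matrix m n 𝕜 →L[𝕜] (EuclideanSpace 𝕜 n →L[𝕜] EuclideanSpace 𝕜 m) :=
  LinearMap.toContinuousLinearMap
    (toEuclideanLin.trans LinearMap.toContinuousLinearMap).toLinearMap

/-- For a BIBO-stable system (`h ∈ L¹`), the Laplace transform `G` is analytic on
the open right half-plane and its `H∞` norm is attained on the boundary:
`sup_{Re s > 0} σ_max(G(s)) = sup_ω σ_max(G(jω))` (maximum modulus principle). -/
theorem laplace_analytic_and_boundary_sup {p m : ℕ}
    (h : ℝ → Matrix (Fin p) (Fin m) ℂ)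
    (hint : @Integrable _ _ SeminormedAddGroup.toContinuousENorm _ _ h (volume.restrict (Set.Ici (0:ℝ))))
    (G : ℂ → Matrix (Fin p) (Fin m) ℂ)
    (hG : ∀ s : ℂ, G s = ∫ t in Set.Ici (0:ℝ), Complex.exp (-s * t) • h t) :
    DifferentiableOn ℂ G {s : ℂ | 0 < s.re}
    ∧ (⨆ s : {s : ℂ // 0 < s.re}, sigmaMax (G s.1))
        = ⨆ ω : ℝ, sigmaMax (G (Complex.I * ω)) := by
  obtain rfl : G = laplaceTransform h := funext hG
  have hdiff : DiffContOnCl ℂ (laplaceTransform h) {s | 0 < s.re} :=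
    diffContOnCl_laplaceTransform hint
  refine ⟨hdiff.differentiableOn, ?_⟩
  -- `sigmaMax M` is `‖L M‖` by definition, so the maximum principle applies to `L ∘ G`.
  let L : Matrix (Fin p) (Fin m) ℂ →L[ℂ] _ := toEuclideanContinuousLinearMap
  exact iSup_norm_rightHalfPlane_eq_iSup_norm_imaginaryAxis
    (L.differentiable.comp_diffContOnCl hdiff) fun z hz => (L.le_opNorm _).trans
      (mul_le_mul_of_nonneg_left (norm_laplaceTransform_le hint hz) (norm_nonneg _))
end
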